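/- arXiv:1710.03162 — 7 statements merged into one kernel-verified Lean document; each statement's English description precedes it below -/
import Mathlib

section
/- Let w ∈ ℝ^n with w ≥ 0. For x, y ∈ ℝ^n, the following are equivalent: (a) x + y - √(x² + y² + 2w) = 0, where squares and square roots are taken componentwise; (b) x ≥ 0, y ≥ 0, and x * y = w. -/
open Real

lemma nonneg_and_nonneg_of_add_nonneg_of_mul_nonneg {α : Type*} [Ring α] [LinearOrder α]
    [IsStrictOrderedRing α] {x y : α} (hsum : 0 ≤ x + y) (hprod : 0 ≤ x * y) :
    0 ≤ x ∧ 0 ≤ y := by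
  rcases nonneg_and_nonneg_or_nonpos_and_nonpos_of_mul_nonneg hprod with h | ⟨hx, hy⟩
  · exact h
  · exact ⟨hsum.trans (add_le_of_nonpos_right hy), hsum.trans (add_le_of_nonpos_left hx)⟩

lemma add_sub_sqrt_eq_zero_iff {w x y : ℝ} (hw : 0 ≤ w) :
    x + y - √(x ^ 2 + y ^ 2 + 2 * w) = 0 ↔ 0 ≤ x ∧ 0 ≤ y ∧ x * y = w := by
  constructor
  · intro h
    have hroot : x + y = √(x ^ 2 + y ^ 2 + 2 * w) := sub_eq_zero.1 h
    have hprod : x * y = w := by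
      have hsq : (x + y) ^ 2 = x ^ 2 + y ^ 2 + 2 * w := by
        rw [hroot, sq_sqrt (by positivity)]
      linarith
    have hsum : 0 ≤ x + y := hroot ▸ sqrt_nonneg _
    obtain ⟨hx, hy⟩ := nonneg_and_nonneg_of_add_nonneg_of_mul_nonneg hsum (hprod ▸ hw)
    exact ⟨hx, hy, hprod⟩
  · rintro ⟨hx, hy, rfl⟩
    rw [show x ^ 2 + y ^ 2 + 2 * (x * y) = (x + y) ^ 2 by ring, sqrt_sq (add_nonneg hx hy),
      sub_self]

theorem stmt_3 (n : ℕ) (w x y : Fin n → ℝ) (hw : ∀ i, 0 ≤ w i) :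
    (∀ i, x i + y i - Real.sqrt ((x i) ^ 2 + (y i) ^ 2 + 2 * w i) = 0) ↔
      ((∀ i, 0 ≤ x i) ∧ (∀ i, 0 ≤ y i) ∧ ∀ i, x i * y i = w i) := by
  simp only [add_sub_sqrt_eq_zero_iff (hw _), forall_and]
end

section
/- Let x, y ∈ ℝ^n and 0 ≤ t ≤ 1. Then t·(x + y - √(x² + y²)) + (1-t)·min(x,y) = 0 if and only if min(x,y) = 0, where all operations (squaring, square root, min) are componentwise. -/
/-!
The scalar function `φ(a, b) = a + b - √(a² + b²)` has the same sign as `min a b`: it vanishes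
exactly when `min a b = 0`, is positive when both arguments are, and is negative otherwise.
A convex combination of two reals of the same sign vanishes only when both do.
-/

lemma sqrt_sq_add_sq_lt_add {a b : ℝ} (ha : 0 < a) (hb : 0 < b) : √(a ^ 2 + b ^ 2) < a + b :=
  (Real.sqrt_lt' (by positivity)).2 (by nlinarith)

lemma add_lt_sqrt_sq_add_sq {a b : ℝ} (h : min a b < 0) : a + b < √(a ^ 2 + b ^ 2) := by
  rcases min_lt_iff.1 h with ha | hb
  · calc a + b < |b| := by linarith [le_abs_self b]
      _ ≤ √(a ^ 2 + b ^ 2) := Real.abs_le_sqrt (by nlinarith)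
  · calc a + b < |a| := by linarith [le_abs_self a]
      _ ≤ √(a ^ 2 + b ^ 2) := Real.abs_le_sqrt (by nlinarith)

lemma sqrt_sq_add_sq_eq_add {a b : ℝ} (h : min a b = 0) : √(a ^ 2 + b ^ 2) = a + b := by
  rcases min_eq_iff.1 h with ⟨rfl, hb⟩ | ⟨rfl, ha⟩
  · simp [Real.sqrt_sq hb]
  · simp [Real.sqrt_sq ha]

lemma sign_add_sub_sqrt_sq_add_sq (a b : ℝ) :
    SignType.sign (a + b - √(a ^ 2 + b ^ 2)) = SignType.sign (min a b) := by
  rcases lt_trichotomy (min a b) 0 with h | h | h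
  · rw [sign_neg h, sign_neg (sub_neg.2 (add_lt_sqrt_sq_add_sq h))]
  · rw [h, sqrt_sq_add_sq_eq_add h, sub_self]
  · obtain ⟨ha, hb⟩ := lt_min_iff.1 h
    rw [sign_pos h, sign_pos (sub_pos.2 (sqrt_sq_add_sq_lt_add ha hb))]

lemma convex_combination_eq_zero_iff_of_sign_eq {u v t : ℝ}
    (hs : SignType.sign u = SignType.sign v) (ht0 : 0 ≤ t) (ht1 : t ≤ 1) :
    t * u + (1 - t) * v = 0 ↔ v = 0 := by
  have hcomb : t + (1 - t) = 1 := add_sub_cancel t 1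
  refine ⟨fun h => ?_, fun hv => ?_⟩
  · rcases lt_trichotomy v 0 with hv | hv | hv
    · have hu : u < 0 := sign_eq_neg_one_iff.1 (hs.trans (sign_neg hv))
      have := convex_Iio (0 : ℝ) hu hv ht0 (sub_nonneg.2 ht1) hcomb
      simp [h] at this
    · exact hv
    · have hu : 0 < u := sign_eq_one_iff.1 (hs.trans (sign_pos hv))
      have := convex_Ioi (0 : ℝ) hu hv ht0 (sub_nonneg.2 ht1) hcomb
      simp [h] at this
  · rw [hv, sign_zero, sign_eq_zero_iff] at hs
    simp [hs, hv]

theorem stmt_4 (n : ℕ) (x y : Fin n → ℝ) (t : ℝ) (ht0 : 0 ≤ t) (ht1 : t ≤ 1) :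
    (∀ i, t * (x i + y i - Real.sqrt ((x i) ^ 2 + (y i) ^ 2)) + (1 - t) * min (x i) (y i) = 0)
      ↔ (∀ i, min (x i) (y i) = 0) :=
  forall_congr' fun i =>
    convex_combination_eq_zero_iff_of_sign_eq (sign_add_sub_sqrt_sq_add_sq (x i) (y i)) ht0 ht1
end

section
/- Let x, y ∈ ℝ. If for some t with 0 < t < 1 we have t·(x + y - √(x² + y²)) + (1-t)·min(x,y) = 0, then x ≥ 0, y ≥ 0, and x·y = 0. -/
/-! The quantity `x + y - √(x² + y²)` has the same strict sign as `min x y` whenever the latter is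
nonzero, so a convex combination of the two with weights in `(0, 1)` can only vanish when
`min x y = 0`, i.e. when both numbers are nonnegative and one of them is zero. -/

open Real

lemma add_sub_sqrt_sq_add_sq_neg_of_min_neg {x y : ℝ} (h : min x y < 0) :
    x + y - √(x ^ 2 + y ^ 2) < 0 := by
  have hx : x ≤ √(x ^ 2 + y ^ 2) := le_sqrt_of_sq_le (by nlinarith)
  have hy : y ≤ √(x ^ 2 + y ^ 2) := le_sqrt_of_sq_le (by nlinarith)
  rcases min_lt_iff.mp h with hx0 | hy0 <;> linarith

lemma add_sub_sqrt_sq_add_sq_pos_of_min_pos {x y : ℝ} (h : 0 < min x y) :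
    0 < x + y - √(x ^ 2 + y ^ 2) := by
  obtain ⟨hx, hy⟩ := lt_min_iff.mp h
  rw [sub_pos, sqrt_lt' (by positivity)]
  nlinarith [mul_pos hx hy]

theorem stmt_5 (x y t : ℝ) (ht0 : 0 < t) (ht1 : t < 1)
    (h : t * (x + y - Real.sqrt (x ^ 2 + y ^ 2)) + (1 - t) * min x y = 0) :
    0 ≤ x ∧ 0 ≤ y ∧ x * y = 0 := by
  have hmin : min x y = 0 := by
    rcases lt_trichotomy (min x y) 0 with hneg | hzero | hpos
    · exact absurd h (add_neg
        (mul_neg_of_pos_of_neg ht0 (add_sub_sqrt_sq_add_sq_neg_of_min_neg hneg))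
        (mul_neg_of_pos_of_neg (sub_pos.mpr ht1) hneg)).ne
    · exact hzero
    · exact absurd h (add_pos
        (mul_pos ht0 (add_sub_sqrt_sq_add_sq_pos_of_min_pos hpos))
        (mul_pos (sub_pos.mpr ht1) hpos)).ne'
  obtain ⟨hx, hy⟩ := le_min_iff.mp hmin.ge
  exact ⟨hx, hy, mul_eq_zero.mpr ((min_eq_iff.mp hmin).imp And.left And.left)⟩
end

section
/- Let A, B, X, Y be n×n real matrices with X and Y commuting (XY = YX). Then the determinant of the 2n×2n block matrix [[A, -B], [X, Y]] equals det(AY + BX). -/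
/-!
Right multiplication by `[[D, 0], [-C, 1]]` turns `[[A, B], [C, D]]` into the block triangular
`[[A * D - B * C, B], [0, D]]` when `C` and `D` commute, so both determinants agree after
multiplication by `det D`. To cancel `det D`, pass to `R[X]` and replace `D` by `charmatrix (-D)`,
i.e. `D + X • 1`: it still commutes with `C`, its determinant is monic and hence a non-zero-divisor,
and evaluation at `0` brings back `D`.
-/

open Matrix Polynomial

theorem map_C_map_evalRingHom {m n R : Type*} [CommRing R] (M : Matrix m n R) (r : R) :
    (M.map Polynomial.C).map (evalRingHom r) = M := by
  ext
  simp

variable {m R : Type*} [Fintype m] [DecidableEq m] [CommRing R]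

theorem det_fromBlocks_mul_det_of_commute {A B C D : Matrix m m R} (hCD : Commute C D) :
    (fromBlocks A B C D).det * D.det = (A * D - B * C).det * D.det := by
  have h : fromBlocks A B C D * fromBlocks D 0 (-C) 1 = fromBlocks (A * D - B * C) B 0 D := by
    simp [fromBlocks_multiply, hCD.eq, sub_eq_add_neg]
  simpa [det_fromBlocks_zero₁₂, det_fromBlocks_zero₂₁] using congrArg det h

theorem map_charmatrix_evalRingHom_zero (M : Matrix m m R) :
    (charmatrix M).map (evalRingHom 0) = -M := by
  ext i j
  by_cases h : i = j <;> simp [h]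

theorem commute_map_C_charmatrix {M N : Matrix m m R} (h : Commute M N) :
    Commute (M.map Polynomial.C) (charmatrix N) := by
  rw [charmatrix]
  exact (scalar_commute _ (fun _ => Commute.all _ _) _).symm.sub_right
    (h.map (Polynomial.C : R →+* R[X]).mapMatrix)

theorem det_fromBlocks_of_commute {A B C D : Matrix m m R} (hCD : Commute C D) :
    (fromBlocks A B C D).det = (A * D - B * C).det := by
  have hC : Commute (C.map Polynomial.C) (charmatrix (-D)) :=
    commute_map_C_charmatrix hCD.neg_right
  have key := (charpoly_monic (-D)).isRegular.right
    (det_fromBlocks_mul_det_of_commute (A := A.map Polynomial.C) (B := B.map Polynomial.C) hC)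
  have := congrArg (evalRingHom 0) key
  rwa [RingHom.map_det, RingHom.map_det, RingHom.mapMatrix_apply, RingHom.mapMatrix_apply,
    fromBlocks_map, Matrix.map_sub _ (map_sub _), Matrix.map_mul, Matrix.map_mul,
    map_C_map_evalRingHom, map_C_map_evalRingHom, map_C_map_evalRingHom,
    map_charmatrix_evalRingHom_zero, neg_neg] at this

theorem stmt_7 (n : ℕ) (A B X Y : Matrix (Fin n) (Fin n) ℝ) (hXY : X * Y = Y * X) :
    (Matrix.fromBlocks A (-B) X Y).det = (A * Y + B * X).det := by
  simpa using det_fromBlocks_of_commute (A := A) (B := -B) hXY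
end

section
/- Let A, B : ℝ^n → ℝ^n be linear maps such that the only pair (x,y) with min(x,y) = 0 and Ax + By = 0 is (0,0). Then for any p ∈ ℝ^n, the set {(x,y) ∈ ℝ^n × ℝ^n : min(x,y) = 0 and Ax + By = t·p for some t ∈ [0,1]} is bounded. -/
/-!
The complementarity set `C = {(x, y) | min(x, y) = 0}` is a closed cone, and by hypothesis the
linear map `L (x, y) = A x + B y` vanishes on `C` only at the origin. By compactness of
`C ∩ sphere 0 1`, `‖L z‖ ≥ c ‖z‖` on `C` for some `c > 0`, so the points of `C` with
`L z = t • p`, `t ∈ [0, 1]`, satisfy `‖z‖ ≤ ‖p‖ / c`.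
-/

open Metric

section ClosedCone

variable {E F : Type*} [NormedAddCommGroup E] [NormedSpace ℝ E] [ProperSpace E]
  [NormedAddCommGroup F] [NormedSpace ℝ F] {C : Set E} (L : E →L[ℝ] F)

theorem exists_pos_mul_norm_le_norm_of_isClosed_cone (hC : IsClosed C)
    (hcone : ∀ a : ℝ, 0 < a → ∀ z ∈ C, a • z ∈ C) (hL : ∀ z ∈ C, L z = 0 → z = 0) :
    ∃ c > 0, ∀ z ∈ C, c * ‖z‖ ≤ ‖L z‖ := by
  have hK : IsCompact (C ∩ sphere 0 1) := (isCompact_sphere 0 1).inter_left hC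
  have hpos : ∀ z ∈ C ∩ sphere 0 1, 0 < ‖L z‖ := by
    rintro z ⟨hzC, hz1⟩
    refine norm_pos_iff.mpr fun h0 => ?_
    simp [hL z hzC h0] at hz1
  obtain ⟨c, hc, hcK⟩ := hK.exists_forall_le' L.continuous.norm.continuousOn hpos
  refine ⟨c, hc, fun z hz => ?_⟩
  rcases eq_or_ne z 0 with rfl | hz0
  · simp
  have hnz : 0 < ‖z‖ := norm_pos_iff.mpr hz0
  have hunit : ‖z‖⁻¹ • z ∈ C ∩ sphere 0 1 :=
    ⟨hcone _ (inv_pos.mpr hnz) z hz, by simp [norm_smul, hnz.ne']⟩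
  have := hcK _ hunit
  rw [map_smul, norm_smul, norm_inv, norm_norm, inv_mul_eq_div, le_div_iff₀ hnz] at this
  linarith

theorem isBounded_inter_preimage_of_isClosed_cone (hC : IsClosed C)
    (hcone : ∀ a : ℝ, 0 < a → ∀ z ∈ C, a • z ∈ C) (hL : ∀ z ∈ C, L z = 0 → z = 0)
    {s : Set F} (hs : Bornology.IsBounded s) : Bornology.IsBounded (C ∩ L ⁻¹' s) := by
  obtain ⟨c, hc, hcC⟩ := exists_pos_mul_norm_le_norm_of_isClosed_cone L hC hcone hL
  obtain ⟨R, hR⟩ := isBounded_iff_forall_norm_le.mp hs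
  refine isBounded_iff_forall_norm_le.mpr ⟨R / c, fun z ⟨hzC, hzs⟩ => ?_⟩
  rw [le_div_iff₀ hc]
  linarith [hcC z hzC, hR _ hzs]

end ClosedCone

section Complementarity

variable {ι : Type*}

def complementaritySet (ι : Type*) : Set ((ι → ℝ) × (ι → ℝ)) :=
  {z | ∀ i, min (z.1 i) (z.2 i) = 0}

theorem isClosed_complementaritySet : IsClosed (complementaritySet ι) := by
  simp only [complementaritySet, Set.ofPred_forall]
  exact isClosed_iInter fun i => isClosed_eq (by fun_prop) continuous_const

theorem smul_mem_complementaritySet {a : ℝ} (ha : 0 ≤ a) {z : (ι → ℝ) × (ι → ℝ)}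
    (hz : z ∈ complementaritySet ι) : a • z ∈ complementaritySet ι := fun i => by
  simp [← mul_min_of_nonneg _ _ ha, hz i]

end Complementarity

theorem stmt_8 (n : ℕ) (A B : (Fin n → ℝ) →ₗ[ℝ] (Fin n → ℝ))
    (hR0 : ∀ x y : Fin n → ℝ, (∀ i, min (x i) (y i) = 0) → A x + B y = 0 → x = 0 ∧ y = 0)
    (p : Fin n → ℝ) :
    Bornology.IsBounded {z : (Fin n → ℝ) × (Fin n → ℝ) |
      (∀ i, min (z.1 i) (z.2 i) = 0) ∧ ∃ t ∈ Set.Icc (0 : ℝ) 1, A z.1 + B z.2 = t • p} := by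
  let L := LinearMap.toContinuousLinearMap (A.coprod B)
  have hL : ∀ z ∈ complementaritySet (Fin n), L z = 0 → z = 0 := fun z hz h0 =>
    Prod.ext_iff.mpr (hR0 z.1 z.2 hz h0)
  refine (isBounded_inter_preimage_of_isClosed_cone L isClosed_complementaritySet
    (fun a ha z hz => smul_mem_complementaritySet ha.le hz) hL
    (isBounded_closedBall (x := 0) (r := ‖p‖))).subset ?_
  rintro z ⟨hz, t, ⟨ht0, ht1⟩, hzt⟩
  refine ⟨hz, ?_⟩
  change ‖A z.1 + B z.2 - 0‖ ≤ ‖p‖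
  rw [sub_zero, hzt, norm_smul, Real.norm_of_nonneg ht0]
  exact mul_le_of_le_one_left (norm_nonneg p) ht1
end

section
/- Let A, B : ℝ^n → ℝ^n be linear maps forming a P-pair (whenever x * y ≤ 0 componentwise and Ax + By = 0, then (x,y) = (0,0)). Then for every w ∈ ℝ^n with w ≥ 0 and every q ∈ ℝ^n, the weighted horizontal LCP has at most one solution: if (x₁,y₁) and (x₂,y₂) both satisfy x ≥ 0, y ≥ 0, x * y = w, Ax + By = q, then x₁ = x₂ and y₁ = y₂. -/
theorem sub_mul_sub_nonpos_of_mul_eq_mul {R : Type*} [CommRing R] [LinearOrder R] [IsStrictOrderedRing R]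
    {a b c d : R} (ha : 0 ≤ a) (hb : 0 ≤ b) (hc : 0 ≤ c) (hd : 0 ≤ d) (h : a * b = c * d) :
    (a - c) * (b - d) ≤ 0 := by
  -- `(ab + cd)² = 4 ab cd ≤ (ad + bc)²`, so `ab + cd ≤ ad + bc`.
  nlinarith [mul_nonneg ha hd, mul_nonneg hc hb, sq_nonneg (a * d - c * b)]

theorem stmt_13_general (n : ℕ) (A B : (Fin n → ℝ) →ₗ[ℝ] (Fin n → ℝ))
    (hP : ∀ x y : Fin n → ℝ, (∀ i, x i * y i ≤ 0) → A x + B y = 0 → x = 0 ∧ y = 0)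
    (w q : Fin n → ℝ)
    (x₁ y₁ x₂ y₂ : Fin n → ℝ)
    (hx₁ : ∀ i, 0 ≤ x₁ i) (hy₁ : ∀ i, 0 ≤ y₁ i) (hw₁ : ∀ i, x₁ i * y₁ i = w i)
    (hq₁ : A x₁ + B y₁ = q)
    (hx₂ : ∀ i, 0 ≤ x₂ i) (hy₂ : ∀ i, 0 ≤ y₂ i) (hw₂ : ∀ i, x₂ i * y₂ i = w i)
    (hq₂ : A x₂ + B y₂ = q) :
    x₁ = x₂ ∧ y₁ = y₂ := by
  have hsign : ∀ i, (x₁ - x₂) i * (y₁ - y₂) i ≤ 0 := fun i =>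
    sub_mul_sub_nonpos_of_mul_eq_mul (hx₁ i) (hy₁ i) (hx₂ i) (hy₂ i) ((hw₁ i).trans (hw₂ i).symm)
  have hker : A (x₁ - x₂) + B (y₁ - y₂) = 0 := by
    rw [map_sub, map_sub]
    linear_combination hq₁ - hq₂
  obtain ⟨hx, hy⟩ := hP _ _ hsign hker
  exact ⟨sub_eq_zero.mp hx, sub_eq_zero.mp hy⟩

theorem stmt_13 (n : ℕ) (A B : (Fin n → ℝ) →ₗ[ℝ] (Fin n → ℝ))
    (hP : ∀ x y : Fin n → ℝ, (∀ i, x i * y i ≤ 0) → A x + B y = 0 → x = 0 ∧ y = 0)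
    (w q : Fin n → ℝ) (hw : ∀ i, 0 ≤ w i)
    (x₁ y₁ x₂ y₂ : Fin n → ℝ)
    (hx₁ : ∀ i, 0 ≤ x₁ i) (hy₁ : ∀ i, 0 ≤ y₁ i) (hw₁ : ∀ i, x₁ i * y₁ i = w i)
    (hq₁ : A x₁ + B y₁ = q)
    (hx₂ : ∀ i, 0 ≤ x₂ i) (hy₂ : ∀ i, 0 ≤ y₂ i) (hw₂ : ∀ i, x₂ i * y₂ i = w i)
    (hq₂ : A x₂ + B y₂ = q) :
    x₁ = x₂ ∧ y₁ = y₂ :=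
  stmt_13_general n A B hP w q x₁ y₁ x₂ y₂ hx₁ hy₁ hw₁ hq₁ hx₂ hy₂ hw₂ hq₂
end

section
/- Let A, B : ℝ^n → ℝ^n be linear maps such that for every q ∈ ℝ^n the horizontal LCP (find x ≥ 0, y ≥ 0 with x * y = 0 and Ax + By = q) has a unique solution. Then {A,B} is a P-pair: whenever x * y ≤ 0 componentwise and Ax + By = 0, we have (x,y) = (0,0). -/
/-! Split `x = x⁺ - x⁻` and `y = y⁺ - y⁻`. The sign condition `x * y ≤ 0` makes both pairs
`(x⁺, y⁺)` and `(x⁻, y⁻)` complementary, and `A x + B y = 0` says exactly that they solve the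
same horizontal LCP, with `q = A x⁻ + B y⁻`. Uniqueness forces `x⁺ = x⁻` and `y⁺ = y⁻`. -/

section SignParts

variable {R : Type*} [Ring R] [LinearOrder R] [IsStrictOrderedRing R] {a b : R}

lemma posPart_mul_posPart_eq_zero_of_mul_nonpos (h : a * b ≤ 0) : a⁺ * b⁺ = 0 := by
  rcases le_or_gt a 0 with ha | ha
  · rw [posPart_eq_zero.2 ha, zero_mul]
  · rw [posPart_eq_zero.2 (nonpos_of_mul_nonpos_right h ha), mul_zero]

lemma negPart_mul_negPart_eq_zero_of_mul_nonpos (h : a * b ≤ 0) : a⁻ * b⁻ = 0 := by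
  simpa using posPart_mul_posPart_eq_zero_of_mul_nonpos (a := -a) (b := -b) (by simpa using h)

end SignParts

lemma map_posPart_add_map_posPart_eq {M N F G : Type*} [AddCommGroup M] [Lattice M]
    [IsOrderedAddMonoid M] [AddCommGroup N] [FunLike F M N] [AddMonoidHomClass F M N]
    [FunLike G M N] [AddMonoidHomClass G M N] (f : F) (g : G) {x y : M} (h : f x + g y = 0) :
    f x⁺ + g y⁺ = f x⁻ + g y⁻ := by
  rw [← posPart_sub_negPart x, ← posPart_sub_negPart y, map_sub, map_sub] at h
  rw [← sub_eq_zero, ← h]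
  abel

section HLCP

variable {ι R M : Type*} [Ring R] [LinearOrder R] [IsStrictOrderedRing R] [AddCommGroup M]

/-- `z` solves the horizontal linear complementarity problem `HLCP(A, B, q)`. -/
def IsHLCPSolution (A B : (ι → R) → M) (q : M) (z : (ι → R) × (ι → R)) : Prop :=
  (∀ i, 0 ≤ z.1 i) ∧ (∀ i, 0 ≤ z.2 i) ∧ (∀ i, z.1 i * z.2 i = 0) ∧ A z.1 + B z.2 = q

variable {F : Type*} [FunLike F (ι → R) M] (A B : F) {x y : ι → R}

lemma isHLCPSolution_negPart (hxy : ∀ i, x i * y i ≤ 0) :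
    IsHLCPSolution A B (A x⁻ + B y⁻) (x⁻, y⁻) :=
  ⟨fun i ↦ negPart_nonneg (x i), fun i ↦ negPart_nonneg (y i),
    fun i ↦ negPart_mul_negPart_eq_zero_of_mul_nonpos (hxy i), rfl⟩

lemma isHLCPSolution_posPart [AddMonoidHomClass F (ι → R) M] (hxy : ∀ i, x i * y i ≤ 0)
    (hAB : A x + B y = 0) :
    IsHLCPSolution A B (A x⁻ + B y⁻) (x⁺, y⁺) :=
  ⟨fun i ↦ posPart_nonneg (x i), fun i ↦ posPart_nonneg (y i),
    fun i ↦ posPart_mul_posPart_eq_zero_of_mul_nonpos (hxy i),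
    map_posPart_add_map_posPart_eq A B hAB⟩

end HLCP

theorem stmt_14 (n : ℕ) (A B : (Fin n → ℝ) →ₗ[ℝ] (Fin n → ℝ))
    (hU : ∀ q : Fin n → ℝ, ∃! z : (Fin n → ℝ) × (Fin n → ℝ),
      (∀ i, 0 ≤ z.1 i) ∧ (∀ i, 0 ≤ z.2 i) ∧ (∀ i, z.1 i * z.2 i = 0) ∧ A z.1 + B z.2 = q) :
    ∀ x y : Fin n → ℝ, (∀ i, x i * y i ≤ 0) → A x + B y = 0 → x = 0 ∧ y = 0 := by
  intro x y hxy hAB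
  obtain ⟨hx, hy⟩ : x⁺ = x⁻ ∧ y⁺ = y⁻ := Prod.mk.inj <|
    (hU _).unique (isHLCPSolution_posPart A B hxy hAB) (isHLCPSolution_negPart A B hxy)
  exact ⟨by rw [← posPart_sub_negPart x, hx, sub_self],
    by rw [← posPart_sub_negPart y, hy, sub_self]⟩
end
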